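/- arXiv:1207.0941 — 2 statements merged into one kernel-verified Lean document; each statement's English description precedes it below -/
import Mathlib

section
/- Let G be a finitely generated one-ended group with finite generating set S and Cayley graph X = Γ(G,S). Then for every integer r ≥ 2 one has V_0^X(r) ≤ 4r; consequently the end depth function V_0^X has linear growth, i.e. V_0^X(r) ∼ r. -/
/-- The Cayley graph of a group `G` with respect to a generating set `S`:
two elements are adjacent iff they differ by a generator (or inverse of one). -/
def cayleyGraph {G : Type*} [Group G] (S : Set G) : SimpleGraph G where
  Adj x y := x ≠ y ∧ (x⁻¹ * y ∈ S ∨ y⁻¹ * x ∈ S)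
  symm := ⟨fun x y h => ⟨h.1.symm, h.2.symm⟩⟩
  loopless := ⟨fun x h => h.1 rfl⟩

/-- The ball of radius `r` centered at the identity in the Cayley graph,
with respect to the word (graph) metric. -/
def cayleyBall {G : Type*} [Group G] (S : Set G) (r : ℕ) : Set G :=
  {x : G | (cayleyGraph S).dist 1 x ≤ r}

/-- `x` and `y` can be joined by a path in the Cayley graph avoiding the ball `B(r)`. -/
def JoinedOutside {G : Type*} [Group G] (S : Set G) (r : ℕ) (x y : G) : Prop :=
  ∃ p : (cayleyGraph S).Walk x y, ∀ v ∈ p.support, v ∉ cayleyBall S r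

/-- The end depth function `V₀(r)`: the least `k` such that any two points outside `B(k)`
can be joined by a path avoiding `B(r)`. -/
noncomputable def endDepth {G : Type*} [Group G] (S : Set G) (r : ℕ) : ℕ :=
  sInf {k : ℕ | ∀ x y : G, x ∉ cayleyBall S k → y ∉ cayleyBall S k → JoinedOutside S r x y}

/-- The number of ends of the Cayley graph of `G` w.r.t. `S`: the supremum over finite
(i.e. compact) sets `K` of the number of infinite (i.e. unbounded) connected components
of the complement of `K`. -/
noncomputable def numEnds {G : Type*} [Group G] (S : Set G) : ℕ∞ :=
  ⨆ (K : Set G) (_ : K.Finite),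
    ENat.card {C : (cayleyGraph S).ComponentCompl K // C.supp.Infinite}

/-- `f` grows at most as fast as `g`. -/
def GrowthLE (f g : ℕ → ℕ) : Prop :=
  ∃ a₁ a₂ a₃ : ℕ, 0 < a₁ ∧ 0 < a₂ ∧ ∀ x : ℕ, f x ≤ a₁ * g (a₂ * x) + a₃

/-!
In any infinite finitely generated group, a point `m` with `|m| > 2r` lies in an infinite
component of `X ∖ B(r)`. Otherwise let `D` be the union of the infinite components of
`X ∖ B(r)`; the set `B(r) ∪ D` is cofinite, since every component meets the finite sphere of
radius `r + 1`. The translate `m • B(r)` misses `B(r)` and (as `m ∉ D`) also `D`, so `B(r) ∪ D`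
lies in one component of `X ∖ m • B(r)`, which is therefore infinite: `B(r) ∪ D ⊆ m • D`.
Iterating, `B(r) ∪ D ⊆ mⁿ • D`, so every positive power of `m` lies in the finite complement of
`B(r) ∪ D`. Hence `m` has finite order, and `1 = m ^ orderOf m ∈ B(r)` lies there too.

With one end, any two points outside `B(2r)` are therefore joined outside `B(r)`, so
`V₀(r) ≤ 2r`; conversely `r ≤ V₀(r)`, because a point `c` with `V₀(r) < |c| ≤ r` exists and
cannot even be joined to itself outside `B(r)`.
-/

namespace SimpleGraph

variable {V : Type*} (Γ : SimpleGraph V)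

def ReachableOutside (K : Set V) (x y : V) : Prop :=
  ∃ p : Γ.Walk x y, ∀ v ∈ p.support, v ∉ K

def componentOutside (K : Set V) (x : V) : Set V :=
  {y | Γ.ReachableOutside K x y}

def infinitePart (K : Set V) : Set V :=
  {x | (Γ.componentOutside K x).Infinite}

variable {Γ} {K K' : Set V} {u x y z : V}

theorem Adj.dist_le_add_one (h : Γ.Adj y z) : Γ.dist u z ≤ Γ.dist u y + 1 := by
  simpa [dist_eq_one_iff_adj.2 h] using h.reachable.dist_triangle_right u

namespace ReachableOutside

theorem refl (hx : x ∉ K) : Γ.ReachableOutside K x x :=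
  ⟨.nil, by simpa using hx⟩

theorem symm (h : Γ.ReachableOutside K x y) : Γ.ReachableOutside K y x :=
  let ⟨p, hp⟩ := h
  ⟨p.reverse, fun v hv => hp v (by simpa using hv)⟩

theorem trans (h : Γ.ReachableOutside K x y) (h' : Γ.ReachableOutside K y z) :
    Γ.ReachableOutside K x z :=
  let ⟨p, hp⟩ := h
  let ⟨q, hq⟩ := h'
  ⟨p.append q, fun v hv => ((Walk.mem_support_append_iff p q).1 hv).elim (hp v) (hq v)⟩

theorem notMem_left (h : Γ.ReachableOutside K x y) : x ∉ K :=
  let ⟨p, hp⟩ := h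
  hp x p.start_mem_support

theorem notMem_right (h : Γ.ReachableOutside K x y) : y ∉ K :=
  h.symm.notMem_left

theorem of_adj (hxy : Γ.Adj x y) (hx : x ∉ K) (hy : y ∉ K) : Γ.ReachableOutside K x y :=
  ⟨hxy.toWalk, by simp [hx, hy]⟩

theorem of_disjoint (h : Γ.ReachableOutside K x y)
    (hK' : Disjoint (Γ.componentOutside K x) K') : Γ.ReachableOutside K' x y := by
  classical
  obtain ⟨p, hp⟩ := h
  exact ⟨p, fun v hv => hK'.notMem_of_mem_left
    ⟨p.takeUntil v hv, fun w hw => hp w (p.support_takeUntil_subset_support hv hw)⟩⟩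

theorem map {W : Type*} {Γ' : SimpleGraph W} (f : Γ ↪g Γ') (h : Γ.ReachableOutside K x y) :
    Γ'.ReachableOutside (f '' K) (f x) (f y) := by
  obtain ⟨p, hp⟩ := h
  refine ⟨p.map f.toHom, fun v hv ⟨w, hwK, hwv⟩ => ?_⟩
  obtain ⟨w', hw', rfl⟩ := List.mem_map.1 ((Walk.support_map _ _) ▸ hv)
  exact hp w' hw' (f.injective hwv ▸ hwK)

end ReachableOutside

theorem Walk.exists_adj_mem_of_notMem {a : V} (p : Γ.Walk x a) (hx : x ∉ K) (ha : a ∈ K) :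
    ∃ c z, Γ.Adj c z ∧ z ∈ K ∧ Γ.ReachableOutside K x c := by
  induction p with
  | nil => exact absurd ha hx
  | @cons x v a h q ih =>
    by_cases hv : v ∈ K
    · exact ⟨x, v, h, hv, .refl hx⟩
    · obtain ⟨c, z, hcz, hz, hvc⟩ := ih hv ha
      exact ⟨c, z, hcz, hz, (ReachableOutside.of_adj h hx hv).trans hvc⟩

theorem Connected.reachableOutside_of_dist (hΓ : Γ.Connected)
    (hK : ∀ v, Γ.dist x v ≤ Γ.dist x y → v ∉ K) : Γ.ReachableOutside K x y := by
  classical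
  obtain ⟨p, hp⟩ := hΓ.exists_walk_length_eq_dist x y
  refine ⟨p, fun v hv => hK v ?_⟩
  calc Γ.dist x v ≤ (p.takeUntil v hv).length := dist_le _
    _ ≤ p.length := p.length_takeUntil_le_length hv
    _ = Γ.dist x y := hp

theorem componentOutside_eq (h : Γ.ReachableOutside K x y) :
    Γ.componentOutside K x = Γ.componentOutside K y :=
  Set.ext fun _ => ⟨h.symm.trans, h.trans⟩

theorem ReachableOutside.mem_infinitePart_iff (h : Γ.ReachableOutside K x y) :
    x ∈ Γ.infinitePart K ↔ y ∈ Γ.infinitePart K := by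
  change (Γ.componentOutside K x).Infinite ↔ (Γ.componentOutside K y).Infinite
  rw [componentOutside_eq h]

theorem notMem_of_mem_infinitePart (hx : x ∈ Γ.infinitePart K) : x ∉ K :=
  let ⟨_, hy⟩ := Set.Infinite.nonempty hx
  ReachableOutside.notMem_left hy

theorem componentOutside_subset_infinitePart (hx : x ∈ Γ.infinitePart K) :
    Γ.componentOutside K x ⊆ Γ.infinitePart K :=
  fun _ hy => (ReachableOutside.mem_infinitePart_iff hy).1 hx

theorem Connected.finite_compl_union_infinitePart (hΓ : Γ.Connected) (hK : K.Nonempty)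
    (hbdry : {c | ∃ z ∈ K, Γ.Adj c z}.Finite) : (K ∪ Γ.infinitePart K)ᶜ.Finite := by
  obtain ⟨a, ha⟩ := hK
  have hfin : (⋃ c ∈ {c | ∃ z ∈ K, Γ.Adj c z} \ Γ.infinitePart K,
      Γ.componentOutside K c).Finite :=
    hbdry.sdiff.biUnion fun c hc => Set.not_infinite.1 hc.2
  refine hfin.subset fun x hx => ?_
  rw [Set.mem_compl_iff, Set.mem_union, not_or] at hx
  obtain ⟨c, z, hcz, hz, hxc⟩ := (hΓ.preconnected x a).some.exists_adj_mem_of_notMem hx.1 ha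
  exact Set.mem_biUnion ⟨⟨z, hz, hcz⟩, fun hc => hx.2 (hxc.mem_infinitePart_iff.2 hc)⟩
    hxc.symm

theorem Connected.infinite_infinitePart [Infinite V] (hΓ : Γ.Connected) (hK : K.Finite)
    (hKne : K.Nonempty) (hbdry : {c | ∃ z ∈ K, Γ.Adj c z}.Finite) :
    (Γ.infinitePart K).Infinite := by
  intro hfin
  have := (hK.union hfin).union (hΓ.finite_compl_union_infinitePart hKne hbdry)
  rw [Set.union_compl_self] at this
  exact Set.infinite_univ this

theorem componentComplMk_eq_iff (hx : x ∉ K) (hy : y ∉ K) :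
    Γ.componentComplMk hx = Γ.componentComplMk hy ↔ Γ.ReachableOutside K x y := by
  refine ConnectedComponent.eq.trans ⟨fun ⟨p⟩ => ⟨p.map (Embedding.induce Kᶜ).toHom, ?_⟩,
    fun ⟨p, hp⟩ => ⟨p.induce Kᶜ hp⟩⟩
  intro v hv
  obtain ⟨w, -, rfl⟩ := List.mem_map.1 ((Walk.support_map _ _) ▸ hv)
  exact w.2

theorem supp_componentComplMk (hx : x ∉ K) :
    (Γ.componentComplMk hx).supp = Γ.componentOutside K x :=
  Set.ext fun _ => ⟨fun ⟨hy, h⟩ => ((componentComplMk_eq_iff hy hx).1 h).symm,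
    fun h => ⟨h.notMem_right, (componentComplMk_eq_iff _ hx).2 h.symm⟩⟩

theorem ReachableOutside.of_mem_infinitePart
    (hK : ENat.card {C : Γ.ComponentCompl K // C.supp.Infinite} ≤ 1)
    (hx : x ∈ Γ.infinitePart K) (hy : y ∈ Γ.infinitePart K) : Γ.ReachableOutside K x y := by
  have := (ENat.card_le_one_iff_subsingleton _).1 hK
  have hx' := notMem_of_mem_infinitePart hx
  have hy' := notMem_of_mem_infinitePart hy
  have hxy := congrArg Subtype.val (Subsingleton.elim
    (⟨_, by rwa [supp_componentComplMk hx']⟩ : {C : Γ.ComponentCompl K // C.supp.Infinite})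
    ⟨_, by rwa [supp_componentComplMk hy']⟩)
  exact (componentComplMk_eq_iff hx' hy').1 hxy

end SimpleGraph

theorem one_mem_of_forall_pow_mem {G : Type*} [Group G] {F : Set G} (hF : F.Finite) {m : G}
    (h : ∀ n, 0 < n → m ^ n ∈ F) : (1 : G) ∈ F := by
  have hm : IsOfFinOrder m := by
    refine finite_powers.1 ((hF.insert 1).subset ?_)
    rintro _ ⟨_ | n, rfl⟩
    · simp
    · exact Set.mem_insert_of_mem _ (h _ n.succ_pos)
  simpa [pow_orderOf_eq_one] using h _ hm.orderOf_pos

open SimpleGraph Pointwise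

section Cayley

variable {G : Type*} [Group G] {S : Set G}

theorem cayleyGraph_adj_mul_left_iff (g : G) {x y : G} :
    (cayleyGraph S).Adj (g * x) (g * y) ↔ (cayleyGraph S).Adj x y := by
  simp [cayleyGraph, mul_assoc]

def cayleyGraphMulLeft (S : Set G) (g : G) : cayleyGraph S ≃g cayleyGraph S :=
  ⟨Equiv.mulLeft g, cayleyGraph_adj_mul_left_iff g⟩

theorem cayleyGraph_reachable_mul (x : G) {s : G} (hs : s ∈ S) :
    (cayleyGraph S).Reachable x (x * s) := by
  by_cases h : x = x * s
  · rw [← h]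
  · exact Adj.reachable ⟨h, Or.inl (by simpa using hs)⟩

theorem cayleyGraph_connected (hgen : Subgroup.closure S = ⊤) : (cayleyGraph S).Connected := by
  have h1 : ∀ x : G, (cayleyGraph S).Reachable 1 x := fun x => by
    induction hgen ▸ Subgroup.mem_top x using Subgroup.closure_induction_right with
    | one => rfl
    | mul_right x _ s hs ih => exact ih.trans (cayleyGraph_reachable_mul x hs)
    | mul_inv_cancel x _ s hs ih =>
      exact ih.trans (by simpa using (cayleyGraph_reachable_mul (x * s⁻¹) hs).symm)
  exact ⟨fun x y => (h1 x).symm.trans (h1 y)⟩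

theorem cayleyGraph_dist_mul_left (hgen : Subgroup.closure S = ⊤) (g x y : G) :
    (cayleyGraph S).dist (g * x) (g * y) = (cayleyGraph S).dist x y := by
  have key : ∀ (g x y : G), (cayleyGraph S).dist (g * x) (g * y) ≤ (cayleyGraph S).dist x y := by
    intro g x y
    obtain ⟨p, hp⟩ := (cayleyGraph_connected hgen).exists_walk_length_eq_dist x y
    calc (cayleyGraph S).dist (g * x) (g * y) ≤ (p.map (cayleyGraphMulLeft S g).toHom).length :=
          dist_le _
      _ = (cayleyGraph S).dist x y := by rw [Walk.length_map, hp]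
  refine le_antisymm (key g x y) ?_
  simpa using key g⁻¹ (g * x) (g * y)

theorem mem_smul_cayleyBall (hgen : Subgroup.closure S = ⊤) {g x : G} {r : ℕ} :
    x ∈ g • cayleyBall S r ↔ (cayleyGraph S).dist g x ≤ r := by
  rw [Set.mem_smul_set_iff_inv_smul_mem, smul_eq_mul]
  change (cayleyGraph S).dist 1 (g⁻¹ * x) ≤ r ↔ _
  rw [← cayleyGraph_dist_mul_left hgen g⁻¹ g x, inv_mul_cancel]

theorem SimpleGraph.Walk.inv_mul_mem_pow_length {u x : G} (p : (cayleyGraph S).Walk u x) :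
    u⁻¹ * x ∈ (S ∪ S⁻¹) ^ p.length := by
  induction p with
  | nil => simp
  | @cons u v x h q ih =>
    rw [Walk.length_cons, pow_succ', show u⁻¹ * x = u⁻¹ * v * (v⁻¹ * x) by group]
    refine Set.mul_mem_mul ?_ ih
    rcases h.2 with hs | hs
    · exact Or.inl hs
    · exact Or.inr (by simpa using hs)

theorem cayleyBall_subset_pow (hgen : Subgroup.closure S = ⊤) (r : ℕ) :
    cayleyBall S r ⊆ insert 1 (S ∪ S⁻¹) ^ r := by
  intro x hx
  obtain ⟨p, hp⟩ := (cayleyGraph_connected hgen).exists_walk_length_eq_dist 1 x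
  refine Set.pow_subset_pow (Set.subset_insert _ _) (Set.mem_insert _ _) (hp.trans_le hx) ?_
  simpa using p.inv_mul_mem_pow_length

theorem cayleyBall_finite (hS : S.Finite) (hgen : Subgroup.closure S = ⊤) (r : ℕ) :
    (cayleyBall S r).Finite := by
  refine Set.Finite.subset ?_ (cayleyBall_subset_pow hgen r)
  induction r with
  | zero => simp
  | succ r ih => exact pow_succ (insert 1 (S ∪ S⁻¹)) r ▸ ih.mul ((hS.union hS.inv).insert 1)

theorem finite_setOf_adj_mem_cayleyBall (hS : S.Finite) (hgen : Subgroup.closure S = ⊤)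
    (r : ℕ) : {c | ∃ z ∈ cayleyBall S r, (cayleyGraph S).Adj c z}.Finite :=
  (cayleyBall_finite hS hgen (r + 1)).subset fun _ ⟨_, hz, hcz⟩ =>
    (hcz.symm.dist_le_add_one).trans (Nat.add_le_add_right hz 1)

theorem reachableOutside_smul_iff (g : G) {K : Set G} {x y : G} :
    (cayleyGraph S).ReachableOutside (g • K) (g * x) (g * y) ↔
      (cayleyGraph S).ReachableOutside K x y := by
  refine ⟨fun h => ?_, fun h => h.map (cayleyGraphMulLeft S g).toEmbedding⟩
  have := h.map (cayleyGraphMulLeft S g⁻¹).toEmbedding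
  change (cayleyGraph S).ReachableOutside (g⁻¹ • g • K) (g⁻¹ * (g * x)) (g⁻¹ * (g * y)) at this
  rwa [inv_smul_smul, inv_mul_cancel_left, inv_mul_cancel_left] at this

theorem one_mem_cayleyBall (r : ℕ) : (1 : G) ∈ cayleyBall S r := by
  simp [cayleyBall]

theorem componentOutside_smul (g : G) (K : Set G) (x : G) :
    (cayleyGraph S).componentOutside (g • K) (g * x) =
      g • (cayleyGraph S).componentOutside K x := by
  ext y
  rw [Set.mem_smul_set_iff_inv_smul_mem, smul_eq_mul]
  change _ ↔ (cayleyGraph S).ReachableOutside K x (g⁻¹ * y)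
  rw [← reachableOutside_smul_iff g, mul_inv_cancel_left]
  rfl

theorem infinitePart_smul (g : G) (K : Set G) :
    (cayleyGraph S).infinitePart (g • K) = g • (cayleyGraph S).infinitePart K := by
  ext x
  rw [Set.mem_smul_set_iff_inv_smul_mem, smul_eq_mul]
  change _ ↔ ((cayleyGraph S).componentOutside K (g⁻¹ * x)).Infinite
  rw [← Set.infinite_smul_set (a := g), ← componentOutside_smul, mul_inv_cancel_left]
  rfl

theorem card_componentCompl_le_numEnds {K : Set G} (hK : K.Finite) :
    ENat.card {C : (cayleyGraph S).ComponentCompl K // C.supp.Infinite} ≤ numEnds S :=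
  le_iSup₂_of_le K hK le_rfl

theorem infinite_of_numEnds_eq_one (hone : numEnds S = 1) : Infinite G := by
  by_contra hfin
  rw [not_infinite_iff_finite] at hfin
  have : numEnds S = 0 := nonpos_iff_eq_zero.1 <| iSup₂_le fun K _ =>
    (ENat.card_eq_zero_iff_empty _).2 ⟨fun C => C.2 (Set.toFinite _)⟩ |>.le
  simp [this] at hone

variable (hS : S.Finite) (hgen : Subgroup.closure S = ⊤) {r : ℕ} {m : G}
include hgen

theorem disjoint_cayleyBall_smul (hm : 2 * r < (cayleyGraph S).dist 1 m) :
    Disjoint (cayleyBall S r) (m • cayleyBall S r) := by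
  refine Set.disjoint_left.2 fun v (h1 : _ ≤ r) hm' => ?_
  have h2 := (mem_smul_cayleyBall hgen).1 hm'
  have := (cayleyGraph_connected hgen).dist_triangle (u := 1) (v := v) (w := m)
  rw [dist_comm (u := v)] at this
  omega

theorem disjoint_infinitePart_smul_cayleyBall (hm : 2 * r < (cayleyGraph S).dist 1 m)
    (hmD : m ∉ (cayleyGraph S).infinitePart (cayleyBall S r)) :
    Disjoint ((cayleyGraph S).infinitePart (cayleyBall S r)) (m • cayleyBall S r) := by
  refine Set.disjoint_right.2 fun c hc hcD => hmD ?_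
  refine ReachableOutside.mem_infinitePart_iff ?_ |>.2 hcD
  -- a geodesic from `m` to `c` stays in `m • B(r)`, hence outside `B(r)`
  refine (cayleyGraph_connected hgen).reachableOutside_of_dist fun v hv => ?_
  exact (disjoint_cayleyBall_smul hgen hm).notMem_of_mem_right
    ((mem_smul_cayleyBall hgen).2 (hv.trans ((mem_smul_cayleyBall hgen).1 hc)))

theorem cayleyBall_union_infinitePart_subset_componentOutside
    (hm : 2 * r < (cayleyGraph S).dist 1 m)
    (hmD : m ∉ (cayleyGraph S).infinitePart (cayleyBall S r)) :
    cayleyBall S r ∪ (cayleyGraph S).infinitePart (cayleyBall S r) ⊆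
      (cayleyGraph S).componentOutside (m • cayleyBall S r) 1 := by
  have hB : cayleyBall S r ⊆ (cayleyGraph S).componentOutside (m • cayleyBall S r) 1 :=
    fun z (hz : _ ≤ r) => (cayleyGraph_connected hgen).reachableOutside_of_dist fun v hv =>
      (disjoint_cayleyBall_smul hgen hm).notMem_of_mem_left (hv.trans hz)
  rintro y (hy | hy)
  · exact hB hy
  obtain ⟨c, z, hcz, hz, hyc⟩ := ((cayleyGraph_connected hgen).preconnected y 1).some
    |>.exists_adj_mem_of_notMem (notMem_of_mem_infinitePart hy) (one_mem_cayleyBall r)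
  have hD := disjoint_infinitePart_smul_cayleyBall hgen hm hmD
  have hyc' : (cayleyGraph S).ReachableOutside (m • cayleyBall S r) y c :=
    hyc.of_disjoint (hD.mono_left (componentOutside_subset_infinitePart hy))
  have hcz' : (cayleyGraph S).ReachableOutside (m • cayleyBall S r) c z :=
    .of_adj hcz (hD.notMem_of_mem_left (hyc.mem_infinitePart_iff.1 hy))
      ((disjoint_cayleyBall_smul hgen hm).notMem_of_mem_left hz)
  exact (hyc'.trans (hcz'.trans (hB hz).symm)).symm

include hS

theorem cayleyBall_union_infinitePart_subset_smul [Infinite G]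
    (hm : 2 * r < (cayleyGraph S).dist 1 m)
    (hmD : m ∉ (cayleyGraph S).infinitePart (cayleyBall S r)) :
    cayleyBall S r ∪ (cayleyGraph S).infinitePart (cayleyBall S r) ⊆
      m • (cayleyGraph S).infinitePart (cayleyBall S r) := by
  have hsub := cayleyBall_union_infinitePart_subset_componentOutside hgen hm hmD
  have hinf : (1 : G) ∈ (cayleyGraph S).infinitePart (m • cayleyBall S r) :=
    ((cayleyGraph_connected hgen).infinite_infinitePart (cayleyBall_finite hS hgen r)
      ⟨1, one_mem_cayleyBall r⟩ (finite_setOf_adj_mem_cayleyBall hS hgen r)).mono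
      (Set.subset_union_right.trans hsub)
  rw [← infinitePart_smul]
  exact hsub.trans (componentOutside_subset_infinitePart hinf)

theorem cayleyBall_union_infinitePart_subset_pow_smul [Infinite G]
    (hm : 2 * r < (cayleyGraph S).dist 1 m)
    (hmD : m ∉ (cayleyGraph S).infinitePart (cayleyBall S r)) {n : ℕ} (hn : 1 ≤ n) :
    cayleyBall S r ∪ (cayleyGraph S).infinitePart (cayleyBall S r) ⊆
      m ^ n • (cayleyGraph S).infinitePart (cayleyBall S r) := by
  have h1 := cayleyBall_union_infinitePart_subset_smul hS hgen hm hmD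
  induction n, hn using Nat.le_induction with
  | base => simpa using h1
  | succ n _ ih =>
    calc _ ⊆ m • (cayleyGraph S).infinitePart (cayleyBall S r) := h1
      _ ⊆ m • (m ^ n • (cayleyGraph S).infinitePart (cayleyBall S r)) :=
        Set.smul_set_mono (Set.subset_union_right.trans ih)
      _ = m ^ (n + 1) • (cayleyGraph S).infinitePart (cayleyBall S r) := by
        rw [smul_smul, pow_succ']

theorem mem_infinitePart_cayleyBall [Infinite G] {x : G}
    (hx : 2 * r < (cayleyGraph S).dist 1 x) :
    x ∈ (cayleyGraph S).infinitePart (cayleyBall S r) := by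
  by_contra hxD
  have hpow : ∀ n, 0 < n →
      x ^ n ∈ (cayleyBall S r ∪ (cayleyGraph S).infinitePart (cayleyBall S r))ᶜ := by
    intro n hn hmem
    have h := cayleyBall_union_infinitePart_subset_pow_smul hS hgen hx hxD hn hmem
    rw [Set.mem_smul_set_iff_inv_smul_mem, smul_eq_mul, inv_mul_cancel] at h
    exact notMem_of_mem_infinitePart h (one_mem_cayleyBall r)
  exact one_mem_of_forall_pow_mem ((cayleyGraph_connected hgen).finite_compl_union_infinitePart
    ⟨1, one_mem_cayleyBall r⟩ (finite_setOf_adj_mem_cayleyBall hS hgen r)) hpow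
    (Or.inl (one_mem_cayleyBall r))

theorem joinedOutside_of_notMem_cayleyBall (hone : numEnds S = 1) {x y : G}
    (hx : x ∉ cayleyBall S (2 * r)) (hy : y ∉ cayleyBall S (2 * r)) : JoinedOutside S r x y :=
  have := infinite_of_numEnds_eq_one hone
  ReachableOutside.of_mem_infinitePart
    ((card_componentCompl_le_numEnds (cayleyBall_finite hS hgen r)).trans hone.le)
    (mem_infinitePart_cayleyBall hS hgen (not_le.1 hx))
    (mem_infinitePart_cayleyBall hS hgen (not_le.1 hy))

theorem endDepth_le_two_mul (hone : numEnds S = 1) (r : ℕ) : endDepth S r ≤ 2 * r :=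
  Nat.sInf_le fun _ _ => joinedOutside_of_notMem_cayleyBall hS hgen hone

theorem le_endDepth (hone : numEnds S = 1) (r : ℕ) : r ≤ endDepth S r := by
  have := infinite_of_numEnds_eq_one hone
  have hk : ∀ x y : G, x ∉ cayleyBall S (endDepth S r) → y ∉ cayleyBall S (endDepth S r) →
      JoinedOutside S r x y :=
    Nat.sInf_mem (s := {k | ∀ x y : G, x ∉ cayleyBall S k → y ∉ cayleyBall S k →
      JoinedOutside S r x y})
      ⟨2 * r, fun _ _ => joinedOutside_of_notMem_cayleyBall hS hgen hone⟩
  by_contra! hlt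
  obtain ⟨y, hy⟩ := (cayleyBall_finite hS hgen (endDepth S r)).infinite_compl.nonempty
  obtain ⟨c, z, hcz, hz, hyc⟩ := ((cayleyGraph_connected hgen).preconnected y 1).some
    |>.exists_adj_mem_of_notMem hy (one_mem_cayleyBall _)
  have hc : c ∈ cayleyBall S r :=
    hcz.symm.dist_le_add_one.trans (Nat.succ_le_of_lt (lt_of_le_of_lt hz hlt))
  exact ReachableOutside.notMem_left (hk c c hyc.notMem_right hyc.notMem_right) hc

end Cayley

/-- The end depth of a finitely generated one ended group is linear: `V₀(r) ≤ 4r` for all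
integers `r ≥ 2`, and consequently `V₀` has linear growth. -/
theorem endDepth_linear {G : Type*} [Group G] (S : Set G) (hS : S.Finite)
    (hgen : Subgroup.closure S = ⊤) (hone : numEnds S = 1) :
    (∀ r : ℕ, 2 ≤ r → endDepth S r ≤ 4 * r) ∧
    GrowthLE (endDepth S) (fun x => x) ∧ GrowthLE (fun x => x) (endDepth S) := by
  have hle := endDepth_le_two_mul hS hgen hone
  have hge := le_endDepth hS hgen hone
  refine ⟨fun r _ => (hle r).trans (by omega), ⟨2, 1, 0, two_pos, one_pos, fun x => ?_⟩,
    ⟨1, 1, 0, one_pos, one_pos, fun x => ?_⟩⟩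
  · simpa using hle x
  · simpa using hge x
end

section
/- (Distant Galaxies Lemma) Let (Y,d) be a finite metric space with exactly n elements and let a be an integer greater than 2. If diam(Y) > (2a+1)^{n+2}, then there exists a gl-partition A = ({A_i}_{i=1}^{n}, n, a) of Y. -/
/-
Start from the partition of `Y` into singletons and keep merging: as long as some point `x` of a
part lies within `a * M` of a point `y` outside it, where `M ≥ 1` bounds the diameters of the
parts, merge the parts of `x` and `y`; the new part has diameter at most `M + a * M + M`, so all
diameters are now bounded by `(a + 2) * M`. If this stops with at least two parts, they form a
gl-partition (listed with repetitions to get `n` of them). Otherwise after `n - 1` merges only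
one part is left, so `diam Y ≤ (a + 2) ^ (n - 1) < (2a + 1) ^ (n + 2)`, a contradiction.
-/

/-- The distance between two subsets of a metric space:
`d(A,B) = inf {d(x,y) | x ∈ A, y ∈ B}`. -/
noncomputable def setDist {Y : Type*} [MetricSpace Y] (A B : Set Y) : ℝ :=
  sInf (Set.image2 dist A B)

/-- `({Aᵢ}ᵢ, m, a)` is a gl-partition of the metric space `Y`: the `Aᵢ` are `m ≥ 2` nonempty
sets (`a` a positive integer), any two of which are equal or disjoint, covering `Y`, and each
of which is at distance greater than `a · max {diam Aⱼ, 1}` from its complement. -/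
def IsGlPartition {Y : Type*} [MetricSpace Y] {m : ℕ} (A : Fin m → Set Y) (a : ℕ) : Prop :=
  2 ≤ m ∧ 0 < a ∧ (∀ i, (A i).Nonempty) ∧
  (∀ i j, A i = A j ∨ A i ∩ A j = ∅) ∧
  (⋃ i, A i) = Set.univ ∧
  ∀ i, (a : ℝ) * (⨆ j, max (Metric.diam (A j)) 1) < setDist (A i) (Set.univ \ A i)

open Finset

namespace Finpartition

variable {α : Type*} [DistribLattice α] [OrderBot α] [DecidableEq α] {a b c : α}

@[simps]
def merge (P : Finpartition a) (hb : b ∈ P.parts) (hc : c ∈ P.parts) (hbc : b ≠ c) :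
    Finpartition a where
  parts := insert (b ⊔ c) ((P.parts.erase b).erase c)
  supIndep := by
    rw [supIndep_iff_pairwiseDisjoint, coe_insert]
    refine (P.disjoint.subset ?_).insert fun d hd _ => ?_
    · exact coe_subset.2 ((erase_subset _ _).trans (erase_subset _ _))
    · obtain ⟨hdc, hdb, hd⟩ : d ≠ c ∧ d ≠ b ∧ d ∈ P.parts :=
        And.imp_right mem_erase.1 (mem_erase.1 hd)
      exact disjoint_sup_left.2 ⟨P.disjoint hb hd hdb.symm, P.disjoint hc hd hdc.symm⟩
  sup_parts := by
    have hc' : c ∈ P.parts.erase b := mem_erase.2 ⟨hbc.symm, hc⟩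
    set rest := (P.parts.erase b).erase c
    have hP : P.parts = insert b (insert c rest) := by rw [insert_erase hc', insert_erase hb]
    rw [← P.sup_parts, hP, sup_insert, sup_insert, sup_insert, id, id, id, sup_assoc]
  bot_notMem h := by
    rcases mem_insert.1 h with h | h
    · exact P.ne_bot hb (sup_eq_bot_iff.1 h.symm).1
    · exact P.bot_notMem (mem_of_mem_erase (mem_of_mem_erase h))

theorem card_merge (P : Finpartition a) (hb : b ∈ P.parts) (hc : c ∈ P.parts) (hbc : b ≠ c) :
    #(P.merge hb hc hbc).parts + 1 = #P.parts := by
  have hc' : c ∈ P.parts.erase b := mem_erase.2 ⟨hbc.symm, hc⟩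
  have hsup : b ⊔ c ∉ (P.parts.erase b).erase c := fun h => by
    obtain ⟨-, hne, hmem⟩ := And.imp_right mem_erase.1 (mem_erase.1 h)
    exact P.ne_bot hb ((P.disjoint hb hmem hne.symm).eq_bot_of_le le_sup_left)
  have hb' := card_erase_of_mem hb
  have := card_pos.2 ⟨c, hc'⟩
  rw [merge_parts, card_insert_of_notMem hsup, card_erase_of_mem hc']
  omega

section Metric

variable {Y : Type*} [PseudoMetricSpace Y] [DecidableEq Y] {s : Finset Y}

def IsSeparated (P : Finpartition s) (r : ℝ) : Prop :=
  ∀ t ∈ P.parts, ∀ x ∈ t, ∀ y ∈ s, y ∉ t → r < dist x y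

theorem diam_le_of_card_parts_le_one (P : Finpartition s) {M : ℝ} (hM : 0 ≤ M)
    (hcard : #P.parts ≤ 1) (hdiam : ∀ t ∈ P.parts, Metric.diam (t : Set Y) ≤ M) :
    Metric.diam (s : Set Y) ≤ M := by
  rcases P.parts.eq_empty_or_nonempty with h | ⟨t, ht⟩
  · rw [parts_eq_empty_iff] at h
    simpa [h] using hM
  · have hP : P.parts = {t} :=
      eq_singleton_iff_unique_mem.2 ⟨ht, fun u hu => card_le_one.1 hcard u hu t ht⟩
    rw [← P.sup_parts, hP, sup_singleton, id]
    exact hdiam t ht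

theorem exists_merge_of_not_isSeparated (P : Finpartition s) {a M : ℝ}
    (ha : 0 ≤ a) (hM : 0 ≤ M) (hdiam : ∀ t ∈ P.parts, Metric.diam (t : Set Y) ≤ M)
    (hsep : ¬P.IsSeparated (a * M)) :
    ∃ Q : Finpartition s, #Q.parts + 1 = #P.parts ∧
      ∀ t ∈ Q.parts, Metric.diam (t : Set Y) ≤ (a + 2) * M := by
  obtain ⟨t, ht, x, hx, y, hys, hyt, hxy⟩ :
      ∃ t ∈ P.parts, ∃ x ∈ t, ∃ y ∈ s, y ∉ t ∧ dist x y ≤ a * M := by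
    simpa [IsSeparated] using hsep
  have hy : y ∈ P.part y := P.mem_part_self.2 hys
  have htu : t ≠ P.part y := fun h => hyt (h ▸ hy)
  refine ⟨P.merge ht (P.part_mem.2 hys) htu, P.card_merge .., fun w hw => ?_⟩
  rcases mem_insert.1 hw with rfl | hw
  · calc Metric.diam ((t ⊔ P.part y : Finset Y) : Set Y)
        = Metric.diam ((t : Set Y) ∪ P.part y) := by rw [sup_eq_union, coe_union]
      _ ≤ Metric.diam (t : Set Y) + dist x y + Metric.diam (P.part y : Set Y) :=
        Metric.diam_union hx hy
      _ ≤ M + a * M + M := by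
        gcongr
        exacts [hdiam t ht, hdiam _ (P.part_mem.2 hys)]
      _ = (a + 2) * M := by ring
  · calc Metric.diam (w : Set Y) ≤ M := hdiam w (mem_of_mem_erase (mem_of_mem_erase hw))
      _ ≤ (a + 2) * M := le_mul_of_one_le_left hM (by linarith)

theorem exists_isSeparated_or_diam_le {a : ℝ} (ha : 0 ≤ a) (k : ℕ)
    (P : Finpartition s) {M : ℝ} (hM : 0 ≤ M) (hcard : #P.parts ≤ k + 1)
    (hdiam : ∀ t ∈ P.parts, Metric.diam (t : Set Y) ≤ M) :
    (∃ Q : Finpartition s, 2 ≤ #Q.parts ∧ ∃ M' ≥ M,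
      (∀ t ∈ Q.parts, Metric.diam (t : Set Y) ≤ M') ∧ Q.IsSeparated (a * M')) ∨
    Metric.diam (s : Set Y) ≤ (a + 2) ^ k * M := by
  induction k generalizing P M with
  | zero => exact .inr (by simpa using P.diam_le_of_card_parts_le_one hM hcard hdiam)
  | succ k ih =>
    by_cases hsep : P.IsSeparated (a * M)
    · by_cases h1 : #P.parts ≤ 1
      · refine .inr ((P.diam_le_of_card_parts_le_one hM h1 hdiam).trans ?_)
        exact le_mul_of_one_le_left hM (one_le_pow₀ (by linarith))
      · exact .inl ⟨P, by omega, M, le_rfl, hdiam, hsep⟩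
    · obtain ⟨Q, hQcard, hQdiam⟩ := P.exists_merge_of_not_isSeparated ha hM hdiam hsep
      rcases ih Q (by positivity) (by omega) hQdiam with ⟨R, hR, M', hM', hRdiam, hRsep⟩ | h
      · have hMM : M ≤ (a + 2) * M := le_mul_of_one_le_left hM (by linarith)
        exact .inl ⟨R, hR, M', hMM.trans hM', hRdiam, hRsep⟩
      · exact .inr (by rwa [pow_succ, mul_assoc])

end Metric

end Finpartition

theorem lt_setDist_of_forall_lt {Y : Type*} [MetricSpace Y] {A B : Set Y} (hA : A.Finite)
    (hB : B.Finite) (hAne : A.Nonempty) (hBne : B.Nonempty) {r : ℝ}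
    (h : ∀ x ∈ A, ∀ y ∈ B, r < dist x y) : r < setDist A B :=
  ((hA.image2 _ hB).lt_csInf_iff (hAne.image2 hBne)).2 (Set.forall_mem_image2.2 h)

theorem Finpartition.exists_isGlPartition_of_isSeparated {Y : Type*} [MetricSpace Y]
    [Fintype Y] [DecidableEq Y] {n a : ℕ} (ha : 0 < a) (Q : Finpartition (univ : Finset Y))
    (h2 : 2 ≤ #Q.parts) (hn : #Q.parts ≤ n)
    {M : ℝ} (hM : 1 ≤ M) (hdiam : ∀ t ∈ Q.parts, Metric.diam (t : Set Y) ≤ M)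
    (hsep : Q.IsSeparated (a * M)) :
    ∃ A : Fin n → Set Y, IsGlPartition A a := by
  have : Nonempty Q.parts := ⟨⟨_, (card_pos.1 (by omega)).choose_spec⟩⟩
  obtain ⟨e⟩ : Nonempty (Q.parts ↪ Fin n) :=
    Function.Embedding.nonempty_of_card_le (by simpa using hn)
  set f := Function.invFun e
  have hf : Function.Surjective f := Function.invFun_surjective e.injective
  have hfne : ∀ i, (f i : Finset Y).Nonempty := fun i => Q.nonempty_of_mem_parts (f i).2
  refine ⟨fun i => f i, by omega, ha, fun i => coe_nonempty.2 (hfne i), fun i j => ?_, ?_,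
    fun i => ?_⟩
  · by_cases h : (f i : Finset Y) = f j
    · exact .inl (congrArg _ h)
    · rw [← Set.disjoint_iff_inter_eq_empty, disjoint_coe]
      exact .inr (Q.disjoint (f i).2 (f j).2 h)
  · refine Set.eq_univ_of_forall fun y => ?_
    obtain ⟨i, hi⟩ := hf ⟨Q.part y, Q.part_mem.2 (mem_univ y)⟩
    exact Set.mem_iUnion.2 ⟨i, by simp [hi, Q.mem_part_self]⟩
  · have : Nonempty (Fin n) := ⟨⟨0, by omega⟩⟩
    have hsup : (⨆ j, max (Metric.diam ((f j : Finset Y) : Set Y)) 1) ≤ M :=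
      ciSup_le fun j => max_le (hdiam _ (f j).2) hM
    obtain ⟨t, ht, hti⟩ := exists_mem_ne (by omega : 1 < #Q.parts) (f i : Finset Y)
    obtain ⟨y, hy⟩ := Q.nonempty_of_mem_parts ht
    have hyi : y ∉ (f i : Finset Y) := fun h => hti (Q.eq_of_mem_parts ht (f i).2 hy h)
    calc (a : ℝ) * ⨆ j, max (Metric.diam ((f j : Finset Y) : Set Y)) 1 ≤ a * M := by gcongr
      _ < setDist (f i : Set Y) (Set.univ \ (f i : Set Y)) :=
        lt_setDist_of_forall_lt (Set.toFinite _) (Set.toFinite _) (coe_nonempty.2 (hfne i))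
          (by exact ⟨y, trivial, hyi⟩) fun x hx z hz => hsep _ (f i).2 x hx z (mem_univ z) hz.2

/-- **Distant Galaxies Lemma.** A finite metric space with `n` elements and diameter greater
than `(2a+1)^(n+2)` (where `a > 2` is an integer) admits a gl-partition `({Aᵢ}ᵢ₌₁ⁿ, n, a)`. -/
theorem distant_galaxies {Y : Type*} [MetricSpace Y] [Fintype Y] (n a : ℕ)
    (hcard : Fintype.card Y = n) (ha : 2 < a)
    (hdiam : ((2 * a + 1 : ℕ) : ℝ) ^ (n + 2) < Metric.diam (Set.univ : Set Y)) :
    ∃ A : Fin n → Set Y, IsGlPartition A a := by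
  classical
  let P : Finpartition (univ : Finset Y) := ⊥
  have hP : #P.parts ≤ (n - 1) + 1 := by rw [Finpartition.card_bot, card_univ, hcard]; omega
  have hPdiam : ∀ t ∈ P.parts, Metric.diam (t : Set Y) ≤ 1 := by
    intro t ht
    obtain ⟨x, -, rfl⟩ := Finpartition.mem_bot_iff.1 ht
    simp
  rcases P.exists_isSeparated_or_diam_le (a := a) (by positivity) (n - 1) zero_le_one hP hPdiam
    with ⟨Q, hQ, M, hM, hQdiam, hQsep⟩ | hsmall
  · exact Q.exists_isGlPartition_of_isSeparated (by omega) hQ (hcard ▸ Q.card_parts_le_card) hM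
      hQdiam hQsep
  · rw [coe_univ, mul_one] at hsmall
    have hbase : (a : ℝ) + 2 ≤ ((2 * a + 1 : ℕ) : ℝ) := by
      have : (1 : ℝ) ≤ a := by exact_mod_cast ha.le.trans' one_le_two
      push_cast
      linarith
    refine absurd hdiam (not_lt.2 ?_)
    calc Metric.diam (Set.univ : Set Y) ≤ ((a : ℝ) + 2) ^ (n - 1) := hsmall
      _ ≤ ((2 * a + 1 : ℕ) : ℝ) ^ (n - 1) := by gcongr
      _ ≤ ((2 * a + 1 : ℕ) : ℝ) ^ (n + 2) :=
        pow_le_pow_right₀ (by linarith) (by omega)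
end
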